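/- Let f : ℝ^d → ℝ be twice continuously differentiable, μ-strongly convex, L-smooth, with κ-Lipschitz Hessian. Let G > 0 and suppose 0 < α ≤ min{1/(2L), μ/(8κG)}. Define F(w) = f(w - α∇f(w)). Then for all w, u with ‖∇f(w)‖ ≤ G and ‖∇f(u)‖ ≤ G, one has (μ/8)‖w - u‖ ≤ ‖∇F(w) - ∇F(u)‖ ≤ (9L/8)‖w - u‖. -/

import Mathlib

open scoped RealInnerProductSpace

/-!
Write `T w = w - α ∇f w` and `A w = I - α ∇²f w`, so that `∇F w = A w ∇f (T w)` and
`∇F w - ∇F u = A w (∇f (T w) - ∇f (T u)) + α (∇²f u - ∇²f w) ∇f (T u)`.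
The Hessian is symmetric with quadratic form in `[μ, L]`, so `A w` is symmetric with quadratic
form in `[1 - αL, 1 - αμ] ⊆ [1/2, 1]`. By the mean value theorem
`(1/2)‖x - y‖ ≤ ‖T x - T y‖ ≤ ‖x - y‖` and `μ‖x - y‖ ≤ ‖∇f x - ∇f y‖ ≤ L‖x - y‖`, hence the first term has norm between `(μ/4)‖w - u‖` and `L‖w - u‖`. The second term is at most
`ακ‖w - u‖ ‖∇f (T u)‖ ≤ (μ/8)‖w - u‖`, because `‖∇f (T u)‖ ≤ ‖∇f u‖`: indeed
`α ∇f (T u) = T u - T (T u)` and `α ∇f u = u - T u`, and `T` is nonexpansive.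
Both bounds follow, using `μ ≤ L` for the upper one.
-/

section InnerProductSpace

variable {E : Type*} [NormedAddCommGroup E] [InnerProductSpace ℝ E]

theorem mul_norm_le_norm_of_mul_sq_le_inner {c : ℝ} {v w : E} (h : c * ‖v‖ ^ 2 ≤ ⟪w, v⟫) :
    c * ‖v‖ ≤ ‖w‖ := by
  rcases (norm_nonneg v).eq_or_lt with hv | hv
  · rw [← hv, mul_zero]
    exact norm_nonneg w
  · refine le_of_mul_le_mul_right ?_ hv
    calc c * ‖v‖ * ‖v‖ = c * ‖v‖ ^ 2 := by ring
      _ ≤ ⟪w, v⟫ := h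
      _ ≤ ‖w‖ * ‖v‖ := real_inner_le_norm w v

theorem ContinuousLinearMap.opNorm_le_of_abs_inner_le {T : E →L[ℝ] E} (hT : T.IsSymmetric)
    {C : ℝ} (hC : 0 ≤ C) (h : ∀ v, |⟪T v, v⟫| ≤ C * ‖v‖ ^ 2) : ‖T‖ ≤ C := by
  rw [T.norm_eq_iSup_rayleighQuotient hT]
  refine ciSup_le fun v => ?_
  rcases eq_or_ne v 0 with rfl | hv
  · simpa using hC
  · rw [rayleighQuotient, reApplyInnerSelf_apply, RCLike.re_to_real, abs_div, abs_sq,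
      div_le_iff₀ (by positivity)]
    exact h v

theorem exists_inner_sub_eq_inner_fderiv {g : E → E} {g' : E → E →L[ℝ] E}
    (hg : ∀ x, HasFDerivAt g (g' x) x) (x y : E) :
    ∃ z, ⟪g x - g y, x - y⟫ = ⟪g' z (x - y), x - y⟫ := by
  set v := x - y
  have hψ : ∀ t : ℝ, HasDerivAt (fun s : ℝ => ⟪g (y + s • v), v⟫) ⟪g' (y + t • v) v, v⟫ t := by
    intro t
    have hline : HasDerivAt (fun s : ℝ => y + s • v) v t := by
      simpa using ((hasDerivAt_id t).smul_const v).const_add y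
    simpa using ((hg _).comp_hasDerivAt t hline).inner ℝ (hasDerivAt_const t v)
  obtain ⟨t, -, ht⟩ := exists_hasDerivAt_eq_slope _ _ one_pos
    (fun t _ => (hψ t).continuousAt.continuousWithinAt) (fun t _ => hψ t)
  refine ⟨y + t • v, ?_⟩
  rw [ht]
  simp [v, inner_sub_left]

theorem mul_norm_sub_le_norm_sub_of_hasFDerivAt {g : E → E} {g' : E → E →L[ℝ] E}
    (hg : ∀ x, HasFDerivAt g (g' x) x) {c : ℝ} (hc : ∀ z v, c * ‖v‖ ^ 2 ≤ ⟪g' z v, v⟫)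
    (x y : E) : c * ‖x - y‖ ≤ ‖g x - g y‖ := by
  obtain ⟨z, hz⟩ := exists_inner_sub_eq_inner_fderiv hg x y
  exact mul_norm_le_norm_of_mul_sq_le_inner (hz ▸ hc z (x - y))

theorem norm_sub_le_of_hasFDerivAt {g : E → E} {g' : E → E →L[ℝ] E}
    (hg : ∀ x, HasFDerivAt g (g' x) x) {C : ℝ} (hC : ∀ z, ‖g' z‖ ≤ C) (x y : E) :
    ‖g x - g y‖ ≤ C * ‖x - y‖ :=
  convex_univ.norm_image_sub_le_of_norm_hasFDerivWithin_le
    (fun z _ => (hg z).hasFDerivWithinAt) (fun z _ => hC z) (Set.mem_univ y) (Set.mem_univ x)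

variable [CompleteSpace E] {f : E → ℝ} {α μ L : ℝ}

theorem ContDiff.differentiable_gradient (hf : ContDiff ℝ 2 f) : Differentiable ℝ (gradient f) :=
  (InnerProductSpace.toDual ℝ E).symm.differentiable.comp
    ((hf.fderiv_right (m := 1) (by norm_num)).differentiable one_ne_zero)

theorem inner_fderiv_gradient_apply (x v w : E) :
    ⟪fderiv ℝ (gradient f) x v, w⟫ = fderiv ℝ (fderiv ℝ f) x v w := by
  have : gradient f = (InnerProductSpace.toDual ℝ E).symm ∘ fderiv ℝ f := rfl
  rw [this, LinearIsometryEquiv.comp_fderiv]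
  exact InnerProductSpace.toDual_symm_apply

theorem ContDiff.isSymmetric_fderiv_gradient (hf : ContDiff ℝ 2 f) (x : E) :
    (fderiv ℝ (gradient f) x).IsSymmetric := fun v w => by
  rw [ContinuousLinearMap.coe_coe, inner_fderiv_gradient_apply, real_inner_comm,
    inner_fderiv_gradient_apply, (hf.contDiffAt.isSymmSndFDerivAt (by simp)).eq]

theorem ContDiff.mul_norm_sub_le_norm_gradient_sub (hf : ContDiff ℝ 2 f)
    (hsc : ∀ x v, μ * ‖v‖ ^ 2 ≤ ⟪fderiv ℝ (gradient f) x v, v⟫) (x y : E) :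
    μ * ‖x - y‖ ≤ ‖gradient f x - gradient f y‖ :=
  mul_norm_sub_le_norm_sub_of_hasFDerivAt (fun z => (hf.differentiable_gradient z).hasFDerivAt)
    hsc x y

theorem ContDiff.norm_gradient_sub_le (hf : ContDiff ℝ 2 f) (hμ : 0 ≤ μ) (hL : 0 ≤ L)
    (hsc : ∀ x v, μ * ‖v‖ ^ 2 ≤ ⟪fderiv ℝ (gradient f) x v, v⟫)
    (hsm : ∀ x v, ⟪fderiv ℝ (gradient f) x v, v⟫ ≤ L * ‖v‖ ^ 2) (x y : E) :
    ‖gradient f x - gradient f y‖ ≤ L * ‖x - y‖ := by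
  refine norm_sub_le_of_hasFDerivAt (fun z => (hf.differentiable_gradient z).hasFDerivAt)
    (fun z => ?_) x y
  refine ContinuousLinearMap.opNorm_le_of_abs_inner_le (hf.isSymmetric_fderiv_gradient z) hL
    fun v => abs_le.mpr ⟨?_, hsm z v⟩
  nlinarith [hsc z v, sq_nonneg ‖v‖]

variable (f) in
noncomputable def gradientStep (α : ℝ) (x : E) : E := x - α • gradient f x

variable (f) in
noncomputable def gradientStepDeriv (α : ℝ) (x : E) : E →L[ℝ] E :=
  ContinuousLinearMap.id ℝ E - α • fderiv ℝ (gradient f) x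

theorem ContDiff.hasFDerivAt_gradientStep (hf : ContDiff ℝ 2 f) (x : E) :
    HasFDerivAt (gradientStep f α) (gradientStepDeriv f α x) x :=
  (hasFDerivAt_id x).sub ((hf.differentiable_gradient x).hasFDerivAt.const_smul α)

theorem ContDiff.isSymmetric_gradientStepDeriv (hf : ContDiff ℝ 2 f) (x : E) :
    (gradientStepDeriv f α x).IsSymmetric := by
  unfold gradientStepDeriv
  push_cast
  exact LinearMap.IsSymmetric.id.sub ((hf.isSymmetric_fderiv_gradient x).smul rfl)

theorem inner_gradientStepDeriv_apply_self (x v : E) :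
    ⟪gradientStepDeriv f α x v, v⟫ = ‖v‖ ^ 2 - α * ⟪fderiv ℝ (gradient f) x v, v⟫ := by
  simp [gradientStepDeriv, inner_sub_left, real_inner_smul_left]

theorem gradientStepDeriv_apply_sub_gradientStepDeriv_apply (x y v w : E) :
    gradientStepDeriv f α x v - gradientStepDeriv f α y w =
      gradientStepDeriv f α x (v - w) +
        α • (fderiv ℝ (gradient f) y - fderiv ℝ (gradient f) x) w := by
  simp only [gradientStepDeriv, FunLike.coe_sub, Pi.sub_apply, ContinuousLinearMap.coe_id',
    id_eq, FunLike.coe_smul, Pi.smul_apply, map_sub, smul_sub]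
  abel

theorem ContDiff.gradient_comp_gradientStep (hf : ContDiff ℝ 2 f) (x : E) :
    gradient (f ∘ gradientStep f α) x =
      gradientStepDeriv f α x (gradient f (gradientStep f α x)) := by
  refine HasGradientAt.gradient ?_
  have hdual : InnerProductSpace.toDual ℝ E
      (gradientStepDeriv f α x (gradient f (gradientStep f α x))) =
      (fderiv ℝ f (gradientStep f α x)).comp (gradientStepDeriv f α x) := by
    ext v
    rw [InnerProductSpace.toDual_apply_apply, (hf.isSymmetric_gradientStepDeriv x).apply_clm]
    simp [inner_gradient_left]
  rw [hasGradientAt_iff_hasFDerivAt, hdual]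
  exact ((hf.differentiable two_ne_zero _).hasFDerivAt).comp x (hf.hasFDerivAt_gradientStep x)

theorem mul_norm_le_norm_gradientStepDeriv_apply (hα : 0 ≤ α)
    (hsm : ∀ x v, ⟪fderiv ℝ (gradient f) x v, v⟫ ≤ L * ‖v‖ ^ 2) (x v : E) :
    (1 - α * L) * ‖v‖ ≤ ‖gradientStepDeriv f α x v‖ := by
  refine mul_norm_le_norm_of_mul_sq_le_inner ?_
  rw [inner_gradientStepDeriv_apply_self]
  nlinarith [mul_le_mul_of_nonneg_left (hsm x v) hα]

theorem ContDiff.norm_gradientStepDeriv_le_one (hf : ContDiff ℝ 2 f) (hμ : 0 ≤ μ)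
    (hα : 0 ≤ α) (hαL : α * L ≤ 2)
    (hsc : ∀ x v, μ * ‖v‖ ^ 2 ≤ ⟪fderiv ℝ (gradient f) x v, v⟫)
    (hsm : ∀ x v, ⟪fderiv ℝ (gradient f) x v, v⟫ ≤ L * ‖v‖ ^ 2) (x : E) :
    ‖gradientStepDeriv f α x‖ ≤ 1 := by
  refine ContinuousLinearMap.opNorm_le_of_abs_inner_le (hf.isSymmetric_gradientStepDeriv x)
    zero_le_one fun v => ?_
  rw [inner_gradientStepDeriv_apply_self, abs_le]
  have hlow := mul_le_mul_of_nonneg_left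
    ((mul_le_mul_of_nonneg_right hμ (sq_nonneg ‖v‖)).trans (hsc x v)) hα
  have hup := mul_le_mul_of_nonneg_left (hsm x v) hα
  constructor <;> nlinarith [sq_nonneg ‖v‖]

theorem ContDiff.norm_gradientStep_sub_le (hf : ContDiff ℝ 2 f) (hμ : 0 ≤ μ) (hα : 0 ≤ α)
    (hαL : α * L ≤ 2) (hsc : ∀ x v, μ * ‖v‖ ^ 2 ≤ ⟪fderiv ℝ (gradient f) x v, v⟫)
    (hsm : ∀ x v, ⟪fderiv ℝ (gradient f) x v, v⟫ ≤ L * ‖v‖ ^ 2) (x y : E) :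
    ‖gradientStep f α x - gradientStep f α y‖ ≤ ‖x - y‖ := by
  simpa using norm_sub_le_of_hasFDerivAt hf.hasFDerivAt_gradientStep
    (hf.norm_gradientStepDeriv_le_one hμ hα hαL hsc hsm) x y

theorem ContDiff.mul_norm_sub_le_norm_gradientStep_sub (hf : ContDiff ℝ 2 f) (hα : 0 ≤ α)
    (hsm : ∀ x v, ⟪fderiv ℝ (gradient f) x v, v⟫ ≤ L * ‖v‖ ^ 2) (x y : E) :
    (1 - α * L) * ‖x - y‖ ≤ ‖gradientStep f α x - gradientStep f α y‖ :=
  mul_norm_sub_le_norm_sub_of_hasFDerivAt hf.hasFDerivAt_gradientStep (fun z v => by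
    rw [inner_gradientStepDeriv_apply_self]
    nlinarith [mul_le_mul_of_nonneg_left (hsm z v) hα]) x y

theorem ContDiff.norm_gradient_gradientStep_le (hf : ContDiff ℝ 2 f) (hμ : 0 ≤ μ) (hα : 0 < α)
    (hαL : α * L ≤ 2) (hsc : ∀ x v, μ * ‖v‖ ^ 2 ≤ ⟪fderiv ℝ (gradient f) x v, v⟫)
    (hsm : ∀ x v, ⟪fderiv ℝ (gradient f) x v, v⟫ ≤ L * ‖v‖ ^ 2) (x : E) :
    ‖gradient f (gradientStep f α x)‖ ≤ ‖gradient f x‖ := by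
  have h := hf.norm_gradientStep_sub_le hμ hα.le hαL hsc hsm (gradientStep f α x) x
  simp only [gradientStep, sub_sub_cancel_left, norm_neg, norm_smul, Real.norm_eq_abs,
    abs_of_pos hα] at h
  exact le_of_mul_le_mul_left h hα

theorem ContDiff.mul_norm_sub_le_norm_gradientStepDeriv_apply_gradient_sub
    (hf : ContDiff ℝ 2 f) (hμ : 0 ≤ μ) (hα : 0 ≤ α) (hαL : α * L ≤ 1)
    (hsc : ∀ x v, μ * ‖v‖ ^ 2 ≤ ⟪fderiv ℝ (gradient f) x v, v⟫)
    (hsm : ∀ x v, ⟪fderiv ℝ (gradient f) x v, v⟫ ≤ L * ‖v‖ ^ 2) (x y : E) :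
    μ * (1 - α * L) ^ 2 * ‖x - y‖ ≤ ‖gradientStepDeriv f α x
      (gradient f (gradientStep f α x) - gradient f (gradientStep f α y))‖ := by
  have hstep := hf.mul_norm_sub_le_norm_gradientStep_sub hα hsm x y
  have hgrad := hf.mul_norm_sub_le_norm_gradient_sub hsc (gradientStep f α x) (gradientStep f α y)
  calc μ * (1 - α * L) ^ 2 * ‖x - y‖ = (1 - α * L) * (μ * ((1 - α * L) * ‖x - y‖)) := by ring
    _ ≤ (1 - α * L) * ‖gradient f (gradientStep f α x) - gradient f (gradientStep f α y)‖ := by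
      gcongr
      exact (mul_le_mul_of_nonneg_left hstep hμ).trans hgrad
    _ ≤ _ := mul_norm_le_norm_gradientStepDeriv_apply hα hsm x _

theorem ContDiff.norm_gradientStepDeriv_apply_gradient_sub_le (hf : ContDiff ℝ 2 f)
    (hμ : 0 ≤ μ) (hL : 0 ≤ L) (hα : 0 ≤ α) (hαL : α * L ≤ 2)
    (hsc : ∀ x v, μ * ‖v‖ ^ 2 ≤ ⟪fderiv ℝ (gradient f) x v, v⟫)
    (hsm : ∀ x v, ⟪fderiv ℝ (gradient f) x v, v⟫ ≤ L * ‖v‖ ^ 2) (x y : E) :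
    ‖gradientStepDeriv f α x
      (gradient f (gradientStep f α x) - gradient f (gradientStep f α y))‖ ≤ L * ‖x - y‖ :=
  calc _ ≤ 1 * ‖gradient f (gradientStep f α x) - gradient f (gradientStep f α y)‖ :=
        (ContinuousLinearMap.le_opNorm _ _).trans
          (by gcongr; exact hf.norm_gradientStepDeriv_le_one hμ hα hαL hsc hsm x)
    _ ≤ 1 * (L * ‖gradientStep f α x - gradientStep f α y‖) := by
      gcongr; exact hf.norm_gradient_sub_le hμ hL hsc hsm _ _
    _ ≤ L * ‖x - y‖ := by
      rw [one_mul]; gcongr; exact hf.norm_gradientStep_sub_le hμ hα hαL hsc hsm x y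

end InnerProductSpace

theorem stmt_5_general {d : ℕ} (f : EuclideanSpace ℝ (Fin d) → ℝ) (μ L κ G α : ℝ)
    (hμ : 0 < μ) (hL : 0 < L) (hκ : 0 < κ) (hG : 0 < G)
    (hf : ContDiff ℝ 2 f)
    (hsc : ∀ w v : EuclideanSpace ℝ (Fin d),
      μ * ‖v‖ ^ 2 ≤ ⟪(fderiv ℝ (gradient f) w) v, v⟫)
    (hsm : ∀ w v : EuclideanSpace ℝ (Fin d),
      ⟪(fderiv ℝ (gradient f) w) v, v⟫ ≤ L * ‖v‖ ^ 2)
    (hhess : ∀ w u : EuclideanSpace ℝ (Fin d),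
      ‖fderiv ℝ (gradient f) w - fderiv ℝ (gradient f) u‖ ≤ κ * ‖w - u‖)
    (hα : 0 < α) (hα2 : α ≤ min (1 / (2 * L)) (μ / (8 * κ * G)))
    (F : EuclideanSpace ℝ (Fin d) → ℝ) (hF : F = fun u => f (u - α • gradient f u))
    (w u : EuclideanSpace ℝ (Fin d)) (hu : ‖gradient f u‖ ≤ G) :
    μ / 8 * ‖w - u‖ ≤ ‖gradient F w - gradient F u‖ ∧
    ‖gradient F w - gradient F u‖ ≤ 9 * L / 8 * ‖w - u‖ := by
  obtain ⟨hαL, hακG⟩ : α * L ≤ 1 / 2 ∧ α * (κ * G) ≤ μ / 8 := by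
    obtain ⟨h1, h2⟩ := le_min_iff.mp hα2
    rw [le_div_iff₀ (by positivity)] at h1 h2
    constructor <;> linarith
  have hgradF (x) : gradient F x = gradientStepDeriv f α x (gradient f (gradientStep f α x)) := by
    subst hF; exact hf.gradient_comp_gradientStep x
  have hmain_low := hf.mul_norm_sub_le_norm_gradientStepDeriv_apply_gradient_sub hμ.le hα.le
    (by linarith) hsc hsm w u
  have hmain_up := hf.norm_gradientStepDeriv_apply_gradient_sub_le hμ.le hL.le hα.le
    (by linarith) hsc hsm w u
  have herr : ‖α • (fderiv ℝ (gradient f) u - fderiv ℝ (gradient f) w)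
      (gradient f (gradientStep f α u))‖ ≤ μ / 8 * ‖w - u‖ := by
    have hGu := (hf.norm_gradient_gradientStep_le hμ.le hα (by linarith) hsc hsm u).trans hu
    rw [norm_smul, Real.norm_eq_abs, abs_of_pos hα]
    calc _ ≤ α * (κ * ‖u - w‖ * G) := by
          gcongr
          exact (ContinuousLinearMap.le_opNorm _ _).trans
            (mul_le_mul (hhess u w) hGu (norm_nonneg _) (by positivity))
      _ ≤ μ / 8 * ‖w - u‖ := by rw [norm_sub_rev]; nlinarith [norm_nonneg (w - u)]
  have hμL := (hf.mul_norm_sub_le_norm_gradient_sub hsc w u).trans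
    (hf.norm_gradient_sub_le hμ.le hL.le hsc hsm w u)
  have hquarter : 1 / 4 ≤ (1 - α * L) ^ 2 := by nlinarith [mul_pos hα hL]
  rw [hgradF, hgradF, gradientStepDeriv_apply_sub_gradientStepDeriv_apply]
  refine ⟨le_trans ?_ (norm_sub_le_norm_add _ _), (norm_add_le _ _).trans ?_⟩
  · nlinarith [mul_le_mul_of_nonneg_left hquarter (mul_nonneg hμ.le (norm_nonneg (w - u)))]
  · linarith

/-- for `f` `μ`-strongly convex, `L`-smooth, with `κ`-Lipschitz Hessian,
`0 < α ≤ min{1/(2L), μ/(8κG)}`, the MAML-loss gradient is bi-Lipschitz on the region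
`‖∇f‖ ≤ G`: `(μ/8)‖w - u‖ ≤ ‖∇F(w) - ∇F(u)‖ ≤ (9L/8)‖w - u‖`. -/
theorem stmt_5 {d : ℕ} (f : EuclideanSpace ℝ (Fin d) → ℝ) (μ L κ G α : ℝ)
    (hμ : 0 < μ) (hL : 0 < L) (hκ : 0 < κ) (hG : 0 < G)
    (hf : ContDiff ℝ 2 f)
    (hsc : ∀ w v : EuclideanSpace ℝ (Fin d),
      μ * ‖v‖ ^ 2 ≤ ⟪(fderiv ℝ (gradient f) w) v, v⟫)
    (hsm : ∀ w v : EuclideanSpace ℝ (Fin d),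
      ⟪(fderiv ℝ (gradient f) w) v, v⟫ ≤ L * ‖v‖ ^ 2)
    (hhess : ∀ w u : EuclideanSpace ℝ (Fin d),
      ‖fderiv ℝ (gradient f) w - fderiv ℝ (gradient f) u‖ ≤ κ * ‖w - u‖)
    (hα : 0 < α) (hα2 : α ≤ min (1 / (2 * L)) (μ / (8 * κ * G)))
    (F : EuclideanSpace ℝ (Fin d) → ℝ) (hF : F = fun u => f (u - α • gradient f u))
    (w u : EuclideanSpace ℝ (Fin d)) (hw : ‖gradient f w‖ ≤ G) (hu : ‖gradient f u‖ ≤ G) :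
    μ / 8 * ‖w - u‖ ≤ ‖gradient F w - gradient F u‖ ∧
    ‖gradient F w - gradient F u‖ ≤ 9 * L / 8 * ‖w - u‖ :=
  stmt_5_general f μ L κ G α hμ hL hκ hG hf hsc hsm hhess hα hα2 F hF w u hu
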